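/- (Davis–Kahan type bound for the noisy top eigenvector.) Let X be a d×n real matrix and A a d×d real symmetric matrix. Let M = (1/n)XXᵀ with eigenvalues σ₁ ≥ σ₂ ≥ … ≥ σ_d and orthonormal eigenvectors v₁,…,v_d, and let M̂ = M + A with orthonormal eigenvectors v̂₁,…,v̂_d, where v̂₁ corresponds to the largest eigenvalue of M̂. If there is a spectral gap δ = σ₁ − σ₂ > 0, then (1/n)‖X − v̂₁v̂₁ᵀX‖_F² ≤ 2 Σ_{i > 1} σᵢ + (8/(nδ²))·‖A‖²·‖X‖_F², where ‖A‖ is the operator norm. -/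

import Mathlib

/-!
Let `M = (1/n) X Xᵀ`, let `u = v̂₁` with eigenvalue `λ̂₁`, and put `cᵢ = ⟨vᵢ, u⟩`. Since `u` is a
unit vector, `(1/n)‖X - u uᵀ X‖_F² = tr M - uᵀ M u = ∑ σᵢ (1 - cᵢ²) ≤ σ₁ (1 - c₁²) + ∑_{i>1} σᵢ`,
and `σ₁ ≤ tr M = ‖X‖_F² / n` because all `σᵢ ≥ 0`.

For the `sin θ` factor `1 - c₁²`, evaluating `vᵢᵀ (M + A) u` in two ways gives
`(λ̂₁ - σᵢ) cᵢ = vᵢᵀ A u`. By Weyl, `λ̂₁ ≥ σ₁ - ‖A‖`, so if `‖A‖ < δ/2` then `λ̂₁ - σᵢ > δ/2`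
for every `i > 1`, whence `1 - c₁² = ∑_{i>1} cᵢ² ≤ (2/δ)² ‖A u‖² ≤ 4‖A‖²/δ²`; if `‖A‖ ≥ δ/2`
this bound holds trivially.
-/

open MeasureTheory Matrix
open scoped ENNReal

/-- The squared Frobenius norm of a matrix. -/
noncomputable def frobSq {m n : ℕ} (B : Matrix (Fin m) (Fin n) ℝ) : ℝ := ∑ i, ∑ j, B i j ^ 2

/-- The operator (spectral) norm of a square matrix. -/
noncomputable def opNorm {d : ℕ} (A : Matrix (Fin d) (Fin d) ℝ) : ℝ :=
  ‖Matrix.toEuclideanCLM (𝕜 := ℝ) A‖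

/-- A family of vectors in `ℝ^d` is orthonormal (with respect to the Euclidean inner product). -/
def OrthonormalFamily {κ : Type*} [DecidableEq κ] {d : ℕ} (v : κ → Fin d → ℝ) : Prop :=
  ∀ i j, v i ⬝ᵥ v j = if i = j then (1 : ℝ) else 0

lemma dotProduct_self_eq_norm_sq {d : ℕ} (u : Fin d → ℝ) :
    u ⬝ᵥ u = ‖WithLp.toLp 2 u‖ ^ 2 := by
  rw [← real_inner_self_eq_norm_sq, EuclideanSpace.inner_toLp_toLp, star_trivial]

lemma abs_dotProduct_mulVec_le {d : ℕ} (A : Matrix (Fin d) (Fin d) ℝ) (u : Fin d → ℝ) :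
    |u ⬝ᵥ A *ᵥ u| ≤ opNorm A * (u ⬝ᵥ u) := by
  set x := WithLp.toLp 2 u
  calc |u ⬝ᵥ A *ᵥ u| ≤ ‖x‖ * ‖toEuclideanCLM (𝕜 := ℝ) A x‖ := by
        rw [← inner_toEuclideanCLM]
        exact abs_real_inner_le_norm _ _
    _ ≤ ‖x‖ * (opNorm A * ‖x‖) := by
        gcongr
        exact ContinuousLinearMap.le_opNorm _ _
    _ = opNorm A * (u ⬝ᵥ u) := by
        rw [dotProduct_self_eq_norm_sq]
        ring

lemma mulVec_dotProduct_mulVec_le {d : ℕ} (A : Matrix (Fin d) (Fin d) ℝ) (u : Fin d → ℝ) :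
    A *ᵥ u ⬝ᵥ A *ᵥ u ≤ opNorm A ^ 2 * (u ⬝ᵥ u) := by
  rw [dotProduct_self_eq_norm_sq, dotProduct_self_eq_norm_sq, ← mul_pow, ← toEuclideanCLM_toLp]
  gcongr
  exact ContinuousLinearMap.le_opNorm _ _

namespace OrthonormalFamily

variable {d : ℕ} {v : Fin d → Fin d → ℝ}

lemma dotProduct_self (hv : OrthonormalFamily v) (i : Fin d) : v i ⬝ᵥ v i = 1 := by
  simpa using hv i i

lemma mul_transpose_self (hv : OrthonormalFamily v) : of v * (of v)ᵀ = 1 := by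
  ext i j
  simpa [mul_apply, one_apply, dotProduct] using hv i j

lemma sum_dotProduct_smul (hv : OrthonormalFamily v) (w : Fin d → ℝ) :
    ∑ i, (v i ⬝ᵥ w) • v i = w := by
  have h : (of v)ᵀ *ᵥ (of v *ᵥ w) = w := by
    rw [mulVec_mulVec, mul_eq_one_comm.mp hv.mul_transpose_self, one_mulVec]
  rwa [mulVec_transpose, vecMul_eq_sum] at h

lemma dotProduct_eq_sum (hv : OrthonormalFamily v) (w u : Fin d → ℝ) :
    w ⬝ᵥ u = ∑ i, (v i ⬝ᵥ w) * (v i ⬝ᵥ u) := by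
  conv_lhs => rw [← hv.sum_dotProduct_smul w]
  simp only [sum_dotProduct, smul_dotProduct, smul_eq_mul]

lemma sum_dotProduct_sq (hv : OrthonormalFamily v) (w : Fin d → ℝ) :
    ∑ i, (v i ⬝ᵥ w) ^ 2 = w ⬝ᵥ w := by
  simp only [hv.dotProduct_eq_sum w w, sq]

variable {B : Matrix (Fin d) (Fin d) ℝ} {μ : Fin d → ℝ}

lemma dotProduct_mulVec_eq_sum (hv : OrthonormalFamily v) (heig : ∀ i, B *ᵥ v i = μ i • v i)
    (w : Fin d → ℝ) : w ⬝ᵥ B *ᵥ w = ∑ i, μ i * (v i ⬝ᵥ w) ^ 2 := by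
  have hBw : B *ᵥ w = ∑ i, (μ i * (v i ⬝ᵥ w)) • v i := by
    conv_lhs => rw [← hv.sum_dotProduct_smul w]
    simp only [mulVec_sum, mulVec_smul, heig, smul_smul, mul_comm]
  rw [hBw, dotProduct_sum]
  refine Finset.sum_congr rfl fun i _ => ?_
  rw [dotProduct_smul, smul_eq_mul, dotProduct_comm]
  ring

lemma trace_eq_sum (hv : OrthonormalFamily v) (heig : ∀ i, B *ᵥ v i = μ i • v i) :
    B.trace = ∑ i, μ i := by
  have hdiag : ∀ j, B j j = ∑ i, μ i * v i j ^ 2 := fun j => by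
    simpa using hv.dotProduct_mulVec_eq_sum heig (Pi.single j 1)
  simp only [trace, diag_apply, hdiag]
  rw [Finset.sum_comm]
  refine Finset.sum_congr rfl fun i _ => ?_
  have hunit : ∑ j, v i j ^ 2 = 1 := by simpa [dotProduct, sq] using hv.dotProduct_self i
  rw [← Finset.mul_sum, hunit, mul_one]

lemma dotProduct_mulVec_le (hv : OrthonormalFamily v) (heig : ∀ i, B *ᵥ v i = μ i • v i)
    {i₀ : Fin d} (htop : ∀ i, μ i ≤ μ i₀) (w : Fin d → ℝ) :
    w ⬝ᵥ B *ᵥ w ≤ μ i₀ * (w ⬝ᵥ w) := by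
  rw [hv.dotProduct_mulVec_eq_sum heig, ← hv.sum_dotProduct_sq, Finset.mul_sum]
  exact Finset.sum_le_sum fun i _ => mul_le_mul_of_nonneg_right (htop i) (sq_nonneg _)

end OrthonormalFamily

lemma frobSq_eq_trace {m n : ℕ} (B : Matrix (Fin m) (Fin n) ℝ) :
    frobSq B = (B * Bᵀ).trace := by
  simp [frobSq, trace, mul_apply, sq]

lemma frobSq_sub_vecMulVec_mul {d n : ℕ} (X : Matrix (Fin d) (Fin n) ℝ) {u : Fin d → ℝ}
    (hu : u ⬝ᵥ u = 1) :
    frobSq (X - vecMulVec u u * X) = (X * Xᵀ).trace - u ⬝ᵥ (X * Xᵀ) *ᵥ u := by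
  set P := vecMulVec u u
  have hPP : P * P = P := by rw [vecMulVec_mul_vecMulVec, hu, one_smul]
  have hQQ : (1 - P) * (1 - P) = 1 - P := by simp [sub_mul, mul_sub, hPP]
  have hQ : (1 - P)ᵀ = 1 - P := by rw [transpose_sub, transpose_one, transpose_vecMulVec]
  have hX : X - P * X = (1 - P) * X := by rw [Matrix.sub_mul, Matrix.one_mul]
  rw [hX, frobSq_eq_trace, transpose_mul, hQ, Matrix.mul_assoc, trace_mul_comm,
    Matrix.mul_assoc, Matrix.mul_assoc, hQQ, ← Matrix.mul_assoc, Matrix.mul_sub, Matrix.mul_one,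
    trace_sub, mul_vecMulVec, trace_vecMulVec, dotProduct_comm]

lemma mul_frobSq_sub_vecMulVec_mul {d n : ℕ} {X : Matrix (Fin d) (Fin n) ℝ} {c : ℝ}
    {v : Fin d → Fin d → ℝ} {σ : Fin d → ℝ} (hv : OrthonormalFamily v)
    (heig : ∀ i, (c • (X * Xᵀ)) *ᵥ v i = σ i • v i) {u : Fin d → ℝ} (hu : u ⬝ᵥ u = 1) :
    c * frobSq (X - vecMulVec u u * X) = ∑ i, σ i * (1 - (v i ⬝ᵥ u) ^ 2) := by
  have htr := hv.trace_eq_sum heig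
  have hquad := hv.dotProduct_mulVec_eq_sum heig u
  simp only [trace_smul, smul_mulVec, dotProduct_smul, smul_eq_mul] at htr hquad
  rw [frobSq_sub_vecMulVec_mul X hu, mul_sub, htr, hquad]
  simp only [mul_sub, mul_one, Finset.sum_sub_distrib]

lemma Matrix.PosSemidef.nonneg_of_mulVec_eq_smul {d : ℕ} {M : Matrix (Fin d) (Fin d) ℝ}
    (hM : M.PosSemidef) {v : Fin d → ℝ} {σ : ℝ} (h : M *ᵥ v = σ • v) (hv : v ⬝ᵥ v = 1) :
    0 ≤ σ := by
  simpa [h, hv] using hM.dotProduct_mulVec_nonneg v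

section Perturbation

variable {d : ℕ} {M A : Matrix (Fin d) (Fin d) ℝ}

lemma sub_mul_dotProduct_eq_dotProduct_mulVec (hM : M.IsSymm) {v u : Fin d → ℝ} {σ μ : ℝ}
    (hv : M *ᵥ v = σ • v) (hu : (M + A) *ᵥ u = μ • u) :
    (μ - σ) * (v ⬝ᵥ u) = v ⬝ᵥ A *ᵥ u := by
  have hMvu : v ⬝ᵥ M *ᵥ u = σ * (v ⬝ᵥ u) := by
    rw [dotProduct_mulVec, ← mulVec_transpose, hM.eq, hv, smul_dotProduct, smul_eq_mul]
  have h := congrArg (v ⬝ᵥ ·) hu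
  simp only [add_mulVec, dotProduct_add, dotProduct_smul, smul_eq_mul, hMvu] at h
  linear_combination -h

lemma eigenvalue_sub_opNorm_le {vh : Fin d → Fin d → ℝ} {σh : Fin d → ℝ}
    (hvh : OrthonormalFamily vh) (heigh : ∀ i, (M + A) *ᵥ vh i = σh i • vh i) {i₀ : Fin d}
    (htop : ∀ i, σh i ≤ σh i₀) {w : Fin d → ℝ} {σ : ℝ} (hw : M *ᵥ w = σ • w)
    (hw1 : w ⬝ᵥ w = 1) : σ - opNorm A ≤ σh i₀ := by
  have hquad := hvh.dotProduct_mulVec_le heigh htop w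
  have hA := (neg_abs_le (w ⬝ᵥ A *ᵥ w)).trans' (neg_le_neg (abs_dotProduct_mulVec_le A w))
  rw [add_mulVec, dotProduct_add, hw, dotProduct_smul, hw1, smul_eq_mul] at hquad
  rw [hw1] at hA
  linarith

variable {v : Fin d → Fin d → ℝ} {σ : Fin d → ℝ} {u : Fin d → ℝ} {μ : ℝ}

lemma sq_mul_one_sub_dotProduct_sq_le (hv : OrthonormalFamily v) (hM : M.IsSymm)
    (heig : ∀ i, M *ᵥ v i = σ i • v i) (hu : u ⬝ᵥ u = 1) (hμ : (M + A) *ᵥ u = μ • u)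
    {i₀ : Fin d} {g : ℝ} (hg : 0 ≤ g) (hgap : ∀ i ≠ i₀, g ≤ |μ - σ i|) :
    g ^ 2 * (1 - (v i₀ ⬝ᵥ u) ^ 2) ≤ opNorm A ^ 2 := by
  have hsplit : 1 - (v i₀ ⬝ᵥ u) ^ 2 = ∑ i ∈ Finset.univ.erase i₀, (v i ⬝ᵥ u) ^ 2 := by
    rw [← hu, ← hv.sum_dotProduct_sq, ← Finset.add_sum_erase _ _ (Finset.mem_univ i₀)]
    ring
  calc g ^ 2 * (1 - (v i₀ ⬝ᵥ u) ^ 2)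
      = ∑ i ∈ Finset.univ.erase i₀, g ^ 2 * (v i ⬝ᵥ u) ^ 2 := by rw [hsplit, Finset.mul_sum]
    _ ≤ ∑ i ∈ Finset.univ.erase i₀, (v i ⬝ᵥ A *ᵥ u) ^ 2 := by
        refine Finset.sum_le_sum fun i hi => ?_
        rw [← sub_mul_dotProduct_eq_dotProduct_mulVec hM (heig i) hμ, mul_pow,
          ← sq_abs (μ - σ i)]
        gcongr
        exact hgap i (Finset.ne_of_mem_erase hi)
    _ ≤ ∑ i, (v i ⬝ᵥ A *ᵥ u) ^ 2 :=
        Finset.sum_le_sum_of_subset_of_nonneg (Finset.erase_subset _ _) fun _ _ _ => sq_nonneg _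
    _ = A *ᵥ u ⬝ᵥ A *ᵥ u := hv.sum_dotProduct_sq _
    _ ≤ opNorm A ^ 2 := by simpa [hu] using mulVec_dotProduct_mulVec_le A u

lemma sq_mul_one_sub_dotProduct_sq_le_four_mul_opNorm_sq (hv : OrthonormalFamily v)
    (hM : M.IsSymm) (heig : ∀ i, M *ᵥ v i = σ i • v i) (hu : u ⬝ᵥ u = 1)
    (hμ : (M + A) *ᵥ u = μ • u) {i₀ : Fin d} (hweyl : σ i₀ - opNorm A ≤ μ) {δ : ℝ}
    (hδ : 0 ≤ δ) (hgap : ∀ i ≠ i₀, σ i + δ ≤ σ i₀) :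
    δ ^ 2 * (1 - (v i₀ ⬝ᵥ u) ^ 2) ≤ 4 * opNorm A ^ 2 := by
  rcases le_or_gt (δ / 2) (opNorm A) with hA | hA
  · nlinarith [sq_nonneg (v i₀ ⬝ᵥ u)]
  · have := sq_mul_one_sub_dotProduct_sq_le hv hM heig hu hμ (g := δ / 2) (by positivity)
      fun i hi => le_trans (by linarith [hgap i hi]) (le_abs_self _)
    linarith

end Perturbation

lemma sum_mul_one_sub_sq_le {ι : Type*} [Fintype ι] [DecidableEq ι] {σ : ι → ℝ}
    (hσ : ∀ i, 0 ≤ σ i) (c : ι → ℝ) (i₀ : ι) :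
    ∑ i, σ i * (1 - c i ^ 2) ≤ σ i₀ * (1 - c i₀ ^ 2) + ∑ i ∈ Finset.univ.erase i₀, σ i := by
  rw [← Finset.add_sum_erase _ _ (Finset.mem_univ i₀)]
  gcongr with i
  nlinarith [hσ i, sq_nonneg (c i)]

lemma Antitone.le_apply_one {d : ℕ} {σ : Fin d → ℝ} (hσ : Antitone σ) (hd : 1 < d) {i : Fin d}
    (hi : i.val ≠ 0) : σ i ≤ σ ⟨1, hd⟩ :=
  hσ (Fin.le_iff_val_le_val.mpr (Nat.one_le_iff_ne_zero.mpr hi))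

theorem stmt_13 (d n : ℕ) (hd : 2 ≤ d)
    (X : Matrix (Fin d) (Fin n) ℝ) (A : Matrix (Fin d) (Fin d) ℝ)
    (σ : Fin d → ℝ) (v : Fin d → Fin d → ℝ)
    (hv : OrthonormalFamily v)
    (heig : ∀ i, ((n : ℝ)⁻¹ • (X * Xᵀ)).mulVec (v i) = σ i • v i)
    (hσ : Antitone σ)
    (σh : Fin d → ℝ) (vh : Fin d → Fin d → ℝ)
    (hvh : OrthonormalFamily vh)
    (heigh : ∀ i, ((n : ℝ)⁻¹ • (X * Xᵀ) + A).mulVec (vh i) = σh i • vh i)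
    (hσh : Antitone σh)
    (δ : ℝ) (hδdef : δ = σ ⟨0, by omega⟩ - σ ⟨1, by omega⟩) (hδ : 0 < δ) :
    (n : ℝ)⁻¹ * frobSq (X - Matrix.vecMulVec (vh ⟨0, by omega⟩) (vh ⟨0, by omega⟩) * X)
      ≤ 2 * (∑ i ∈ Finset.univ.filter fun i : Fin d => 1 ≤ i.val, σ i)
        + 8 / (n * δ ^ 2) * opNorm A ^ 2 * frobSq X := by
  set i₀ : Fin d := ⟨0, by omega⟩
  set u := vh i₀
  have hM : ((n : ℝ)⁻¹ • (X * Xᵀ)).PosSemidef :=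
    (by simpa using posSemidef_self_mul_conjTranspose X : (X * Xᵀ).PosSemidef).smul (by positivity)
  have hσ_nonneg i : 0 ≤ σ i := hM.nonneg_of_mulVec_eq_smul (heig i) (hv.dotProduct_self i)
  have hσ₀ : σ i₀ ≤ (n : ℝ)⁻¹ * frobSq X := by
    rw [frobSq_eq_trace, ← smul_eq_mul, ← trace_smul, hv.trace_eq_sum heig]
    exact Finset.single_le_sum (fun i _ => hσ_nonneg i) (Finset.mem_univ i₀)
  have hsin : δ ^ 2 * (1 - (v i₀ ⬝ᵥ u) ^ 2) ≤ 4 * opNorm A ^ 2 :=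
    sq_mul_one_sub_dotProduct_sq_le_four_mul_opNorm_sq hv (isHermitian_iff_isSymm.mp hM.1) heig
      (hvh.dotProduct_self i₀) (heigh i₀)
      (eigenvalue_sub_opNorm_le hvh heigh (fun _ => hσh (Fin.le_iff_val_le_val.mpr (Nat.zero_le _)))
        (heig i₀) (hv.dotProduct_self i₀)) hδ.le
      fun i hi => by linarith [hσ.le_apply_one hd fun h => hi (Fin.ext h)]
  have hfirst : σ i₀ * (1 - (v i₀ ⬝ᵥ u) ^ 2) ≤ 8 / (n * δ ^ 2) * opNorm A ^ 2 * frobSq X := by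
    rw [show 8 / (n * δ ^ 2) * opNorm A ^ 2 * frobSq X
        = (n : ℝ)⁻¹ * frobSq X * (8 * opNorm A ^ 2) / δ ^ 2 by ring, le_div_iff₀ (by positivity)]
    nlinarith [mul_le_mul_of_nonneg_left hsin (hσ_nonneg i₀), hσ_nonneg i₀, sq_nonneg (opNorm A)]
  have hfilter : (Finset.univ.filter fun i : Fin d => 1 ≤ i.val) = Finset.univ.erase i₀ := by
    ext i
    simp [i₀, Fin.ext_iff, Nat.one_le_iff_ne_zero]
  rw [mul_frobSq_sub_vecMulVec_mul hv heig (hvh.dotProduct_self i₀), hfilter]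
  linarith [sum_mul_one_sub_sq_le hσ_nonneg (fun i => v i ⬝ᵥ u) i₀,
    Finset.sum_nonneg fun i (_ : i ∈ Finset.univ.erase i₀) => hσ_nonneg i]
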